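/- For n = 2m ≥ 4, the basis (set of nonzero primitive elements) of the monoid of Young diagrams P of order n, with row lengths p_1 ≥ ... ≥ p_n under rowwise addition, satisfying the two inequalities −p_1 + ∑_{i=2}^{m+1} p_i − ∑_{i=m+2}^{2m} p_i ≥ 0 and −∑_{i=1}^{m−1} p_i + ∑_{i=m}^{2m−1} p_i − p_{2m} ≤ 0, together with the condition that the total number of boxes is even, is exactly: the even-size primitive elements of the monoid cut out by the two inequalities alone, together with all sums C_i + C_j with 2 ≤ i ≤ j ≤ n−2 and both i, j odd, where C_i denotes the single-column diagram of height i. -/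

import Mathlib

/-- A Young diagram of order `n`, given by its (weakly decreasing) row lengths,
vanishing from row `n` on. Rows are indexed from `0`. -/
def IsYoung (n : ℕ) (P : ℕ → ℕ) : Prop :=
  (∀ i, P (i + 1) ≤ P i) ∧ ∀ i, n ≤ i → P i = 0

/-- The total number of boxes of a Young diagram of order `n`. -/
def ysize (n : ℕ) (P : ℕ → ℕ) : ℕ := ∑ i ∈ Finset.range n, P i

/-- The single-column Young diagram of height `i`. -/
def Col (i : ℕ) : ℕ → ℕ := fun r => if r < i then 1 else 0

/-- `P` is a nonzero primitive element of the submonoid `{R | S R}` of Young diagrams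
under rowwise addition: it belongs to it, is nonzero, and is not the sum of two
nonzero elements of it. -/
def PrimitiveIn (S : (ℕ → ℕ) → Prop) (P : ℕ → ℕ) : Prop :=
  S P ∧ P ≠ (fun _ => 0) ∧
  ∀ A B : ℕ → ℕ, S A → S B → A ≠ (fun _ => 0) → B ≠ (fun _ => 0) →
    P ≠ (fun r => A r + B r)

/-- The pair of inequalities (6.2.3.m) on the row lengths `p_i = P (i-1)`:
`-p₁ + ∑_{i=2}^{m+1} p_i - ∑_{i=m+2}^{2m} p_i ≥ 0` and
`-∑_{i=1}^{m-1} p_i + ∑_{i=m}^{2m-1} p_i - p_{2m} ≤ 0`. -/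
def RowIneq (m : ℕ) (P : ℕ → ℕ) : Prop :=
  0 ≤ -(P 0 : ℤ) + ∑ i ∈ Finset.Icc 2 (m + 1), (P (i - 1) : ℤ)
      - ∑ i ∈ Finset.Icc (m + 2) (2 * m), (P (i - 1) : ℤ) ∧
  -(∑ i ∈ Finset.Icc 1 (m - 1), (P (i - 1) : ℤ))
      + ∑ i ∈ Finset.Icc m (2 * m - 1), (P (i - 1) : ℤ) - (P (2 * m - 1) : ℤ) ≤ 0

/-!
Call the monoid cut out by the two inequalities the cone. Their linear forms `rowForm₁`,
`rowForm₂` are congruent mod 2 to the number of boxes, and on a column `C_a` they take the values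
`min (a - 2) (2m - a)` and `min a (2m - 2 - a)`, never below `-1`. Hence both forms are `≥ 1` on
an element of odd size of the cone: it stays in the cone when any column is added, and an odd
column can be removed from it inside the cone (one of height `1` or `2m - 1` if there is one;
otherwise any odd column, since a diagram without columns of height `1` and `2m - 1` lies in the
cone). If an even primitive `P` splits in the cone as `A + B`, then `A` and `B` are odd, and
moving the removed column from `A` to `B` would split `P` into two even elements; so `A` and `B`
are odd columns, which lie in the cone exactly when their height is between `3` and `2m - 3`.
Conversely, such a sum `C_i + C_j` only splits as `C_i` plus `C_j`.
-/

open Finset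

lemma sum_Icc_sub_one {M : Type*} [AddCommMonoid M] (f : ℕ → M) (a b : ℕ) :
    ∑ i ∈ Icc (a + 1) b, f (i - 1) = ∑ i ∈ Ico a b, f i := by
  rw [← Ico_add_one_right_eq_Icc, sum_Ico_add_right_sub_eq]

lemma sum_Ico_add_le_of_antitone {M : Type*} [AddCommMonoid M] [PartialOrder M]
    [IsOrderedAddMonoid M] {f : ℕ → M} (hf : Antitone f) (a b c : ℕ) :
    ∑ j ∈ Ico (a + c) (b + c), f j ≤ ∑ j ∈ Ico a b, f j := by
  rw [← sum_Ico_add']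
  exact sum_le_sum fun j _ => hf (Nat.le_add_right j c)

lemma even_sum_range_two_mul {f : ℕ → ℕ} (hf : ∀ j, f (2 * j + 1) = f (2 * j)) (m : ℕ) :
    Even (∑ i ∈ range (2 * m), f i) := by
  induction m with
  | zero => simp
  | succ k ih =>
    rw [show 2 * (k + 1) = 2 * k + 1 + 1 by ring, sum_range_succ, sum_range_succ, hf, add_assoc]
    exact ih.add ⟨_, rfl⟩

lemma IsYoung.antitone {n : ℕ} {P : ℕ → ℕ} (hP : IsYoung n P) : Antitone P :=
  antitone_nat_of_succ_le hP.1

lemma IsYoung.add {n : ℕ} {A B : ℕ → ℕ} (hA : IsYoung n A) (hB : IsYoung n B) :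
    IsYoung n (A + B) :=
  ⟨fun i => Nat.add_le_add (hA.1 i) (hB.1 i), fun i hi => by simp [hA.2 i hi, hB.2 i hi]⟩

lemma isYoung_col {n h : ℕ} (hh : h ≤ n) : IsYoung n (Col h) :=
  ⟨fun i => by unfold Col; split_ifs <;> omega, fun i hi => if_neg (by omega)⟩

lemma IsYoung.pos_of_ne_zero {n : ℕ} {P : ℕ → ℕ} (hP : IsYoung n P) (h0 : P ≠ 0) : 0 < P 0 := by
  refine Nat.pos_of_ne_zero fun hP0 => h0 (funext fun r => ?_)
  have := hP.antitone (Nat.zero_le r)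
  simp only [Pi.zero_apply]
  omega

lemma IsYoung.eq_col {n h : ℕ} {P : ℕ → ℕ} (hP : IsYoung n P) (hlow : ∀ r < h, P r = 1)
    (hh : P h = 0) : P = Col h := by
  funext r
  by_cases hr : r < h
  · simp [Col, hr, hlow r hr]
  · have := hP.antitone (not_lt.mp hr)
    simp only [Col, hr, if_false]
    omega

lemma IsYoung.exists_eq_col_add {n k : ℕ} {P : ℕ → ℕ} (hP : IsYoung n P)
    (hk : P (k + 1) < P k) : ∃ P', IsYoung n P' ∧ P = Col (k + 1) + P' := by
  refine ⟨P - Col (k + 1), ⟨fun i => ?_, fun i hi => ?_⟩, funext fun r => ?_⟩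
  · have := hP.1 i
    simp only [Pi.sub_apply, Col]
    split_ifs with h₁ h₂
    · omega
    · omega
    · obtain rfl : i = k := by omega
      omega
    · omega
  · simp [hP.2 i hi]
  · simp only [Pi.add_apply, Pi.sub_apply, Col]
    split_ifs with hr
    · have := hP.antitone (Nat.le_of_lt_succ hr)
      omega
    · omega

lemma IsYoung.exists_odd_col {m : ℕ} {P : ℕ → ℕ} (hP : IsYoung (2 * m) P)
    (hodd : Odd (ysize (2 * m) P)) : ∃ k, Even k ∧ P (k + 1) < P k := by
  by_contra! h
  refine Nat.not_even_iff_odd.mpr hodd (even_sum_range_two_mul (fun j => ?_) m)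
  exact le_antisymm (hP.1 _) (h _ (even_two_mul j))

lemma IsYoung.eq_col_of_add_eq_col_add_col {n i j : ℕ} {A B : ℕ → ℕ} (hA : IsYoung n A)
    (hB : IsYoung n B) (hA0 : A ≠ 0) (hB0 : B ≠ 0) (hij : i ≤ j)
    (h : A + B = Col i + Col j) : A = Col i ∧ B = Col j ∨ A = Col j ∧ B = Col i := by
  have hpt (r : ℕ) : A r + B r = Col i r + Col j r := congrFun h r
  have hA1 : A 0 = 1 ∧ B 0 = 1 := by
    have := hpt 0
    have := hA.pos_of_ne_zero hA0
    have := hB.pos_of_ne_zero hB0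
    simp only [Col] at *
    split_ifs at * <;> omega
  have hlow (r : ℕ) (hr : r < i) : A r = 1 ∧ B r = 1 := by
    have := hpt r
    have := hA.antitone (Nat.zero_le r)
    have := hB.antitone (Nat.zero_le r)
    simp only [Col, hr, show r < j by omega, if_true] at *
    omega
  have hmid : A i = 0 ∨ B i = 0 := by
    have := hpt i
    simp only [Col, lt_irrefl, if_false] at this
    split_ifs at this <;> omega
  rcases hmid with hAi | hBi
  · have hAc := hA.eq_col (fun r hr => (hlow r hr).1) hAi
    refine Or.inl ⟨hAc, funext fun r => ?_⟩
    have := hpt r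
    rw [hAc] at this
    omega
  · have hBc := hB.eq_col (fun r hr => (hlow r hr).2) hBi
    refine Or.inr ⟨funext fun r => ?_, hBc⟩
    have := hpt r
    rw [hBc] at this
    omega

lemma sum_Ico_col (h a b : ℕ) : ∑ j ∈ Ico a b, Col h j = min b h - a := by
  simp only [Col, sum_boole, Nat.cast_id, Ico_filter_lt, Nat.card_Ico]

lemma ysize_add (n : ℕ) (A B : ℕ → ℕ) : ysize n (A + B) = ysize n A + ysize n B :=
  sum_add_distrib

lemma ysize_col (n h : ℕ) : ysize n (Col h) = min n h := by
  simpa [ysize] using sum_Ico_col h 0 n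

def rowForm₁ (m : ℕ) (P : ℕ → ℕ) : ℤ :=
  ∑ j ∈ Ico 1 (m + 1), (P j : ℤ) - P 0 - ∑ j ∈ Ico (m + 1) (2 * m), (P j : ℤ)

def rowForm₂ (m : ℕ) (P : ℕ → ℕ) : ℤ :=
  ∑ j ∈ range (m - 1), (P j : ℤ) - ∑ j ∈ Ico (m - 1) (2 * m - 1), (P j : ℤ) + P (2 * m - 1)

lemma rowIneq_iff {m : ℕ} (hm : 1 ≤ m) (P : ℕ → ℕ) :
    RowIneq m P ↔ 0 ≤ rowForm₁ m P ∧ 0 ≤ rowForm₂ m P := by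
  obtain ⟨k, rfl⟩ : ∃ k, m = k + 1 := ⟨m - 1, by omega⟩
  have h₁ := sum_Icc_sub_one (fun j => (P j : ℤ)) 1 (k + 2)
  have h₂ := sum_Icc_sub_one (fun j => (P j : ℤ)) (k + 2) (2 * (k + 1))
  have h₃ := sum_Icc_sub_one (fun j => (P j : ℤ)) 0 k
  have h₄ := sum_Icc_sub_one (fun j => (P j : ℤ)) k (2 * (k + 1) - 1)
  simp only [RowIneq, rowForm₁, rowForm₂, Nat.add_sub_cancel, ← Nat.Ico_zero_eq_range] at *
  rw [h₁, h₂, h₃, h₄]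
  constructor <;> rintro ⟨_, _⟩ <;> constructor <;> linarith

lemma rowForm₁_add (m : ℕ) (A B : ℕ → ℕ) : rowForm₁ m (A + B) = rowForm₁ m A + rowForm₁ m B := by
  simp only [rowForm₁, Pi.add_apply, Nat.cast_add, sum_add_distrib]; ring

lemma rowForm₂_add (m : ℕ) (A B : ℕ → ℕ) : rowForm₂ m (A + B) = rowForm₂ m A + rowForm₂ m B := by
  simp only [rowForm₂, Pi.add_apply, Nat.cast_add, sum_add_distrib]; ring

lemma RowIneq.add {m : ℕ} {A B : ℕ → ℕ} (hA : RowIneq m A) (hB : RowIneq m B) :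
    RowIneq m (A + B) := by
  simp only [RowIneq, Pi.add_apply, Nat.cast_add, sum_add_distrib] at *
  constructor <;> linarith [hA.1, hA.2, hB.1, hB.2]

lemma rowForm₁_col {m a : ℕ} (ha : 1 ≤ a) (ha' : a ≤ 2 * m) :
    rowForm₁ m (Col a) = min ((a : ℤ) - 2) (2 * m - a) := by
  simp only [rowForm₁, ← Nat.cast_sum, sum_Ico_col]
  simp only [Col]
  split_ifs <;> omega

lemma rowForm₂_col {m a : ℕ} (ha : 1 ≤ a) (ha' : a ≤ 2 * m - 1) :
    rowForm₂ m (Col a) = min (a : ℤ) (2 * m - 2 - a) := by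
  simp only [rowForm₂, ← Nat.cast_sum, ← Nat.Ico_zero_eq_range, sum_Ico_col]
  simp only [Col]
  split_ifs <;> omega

lemma rowIneq_col_iff {m a : ℕ} (ha : 1 ≤ a) (ha' : a ≤ 2 * m - 1) :
    RowIneq m (Col a) ↔ 2 ≤ a ∧ a ≤ 2 * m - 2 := by
  rw [rowIneq_iff (by omega), rowForm₁_col ha (by omega), rowForm₂_col ha ha']
  omega

lemma even_ysize_sub_rowForm₁ {m : ℕ} (hm : 1 ≤ m) (P : ℕ → ℕ) :
    Even ((ysize (2 * m) P : ℤ) - rowForm₁ m P) := by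
  have hsplit : ysize (2 * m) P =
      P 0 + ∑ j ∈ Ico 1 (m + 1), P j + ∑ j ∈ Ico (m + 1) (2 * m), P j := by
    rw [ysize, range_eq_Ico,
      ← sum_Ico_consecutive _ (by omega : 0 ≤ m + 1) (by omega : m + 1 ≤ 2 * m),
      sum_eq_sum_Ico_succ_bot (by omega : 0 < m + 1)]
  rw [hsplit, rowForm₁]
  push_cast
  exact ⟨P 0 + ∑ j ∈ Ico (m + 1) (2 * m), (P j : ℤ), by ring⟩

lemma even_ysize_sub_rowForm₂ {m : ℕ} (hm : 1 ≤ m) (P : ℕ → ℕ) :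
    Even ((ysize (2 * m) P : ℤ) - rowForm₂ m P) := by
  have hsplit : ysize (2 * m) P =
      ∑ j ∈ range (m - 1), P j + ∑ j ∈ Ico (m - 1) (2 * m - 1), P j + P (2 * m - 1) := by
    rw [add_assoc, ← sum_Ico_succ_top (by omega : m - 1 ≤ 2 * m - 1),
      Nat.sub_add_cancel (by omega : 1 ≤ 2 * m), range_eq_Ico,
      sum_Ico_consecutive _ (by omega) (by omega), ysize, range_eq_Ico]
  rw [hsplit, rowForm₂]
  push_cast
  exact ⟨∑ j ∈ Ico (m - 1) (2 * m - 1), (P j : ℤ), by ring⟩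

lemma RowIneq.one_le_of_odd {m : ℕ} (hm : 1 ≤ m) {P : ℕ → ℕ} (hP : RowIneq m P)
    (hodd : Odd (ysize (2 * m) P)) : 1 ≤ rowForm₁ m P ∧ 1 ≤ rowForm₂ m P := by
  rw [rowIneq_iff hm] at hP
  obtain ⟨c, hc⟩ := hodd
  obtain ⟨d₁, hd₁⟩ := even_ysize_sub_rowForm₁ hm P
  obtain ⟨d₂, hd₂⟩ := even_ysize_sub_rowForm₂ hm P
  omega

lemma RowIneq.add_col_of_odd {m a : ℕ} {P : ℕ → ℕ} (hP : RowIneq m P)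
    (hodd : Odd (ysize (2 * m) P)) (ha : 1 ≤ a) (ha' : a ≤ 2 * m - 1) :
    RowIneq m (P + Col a) := by
  have hm : 1 ≤ m := by omega
  have := hP.one_le_of_odd hm hodd
  rw [rowIneq_iff hm, rowForm₁_add, rowForm₂_add, rowForm₁_col ha (by omega), rowForm₂_col ha ha']
  omega

lemma RowIneq.of_col_add_of_odd {m a : ℕ} (hm : 1 ≤ m) {P : ℕ → ℕ} (hP : RowIneq m (Col a + P))
    (hodd : Odd (ysize (2 * m) (Col a + P))) (h₁ : rowForm₁ m (Col a) ≤ 1)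
    (h₂ : rowForm₂ m (Col a) ≤ 1) : RowIneq m P := by
  have := hP.one_le_of_odd hm hodd
  rw [rowForm₁_add, rowForm₂_add] at this
  rw [rowIneq_iff hm]
  omega

lemma rowIneq_of_flat {m : ℕ} (hm : 1 ≤ m) {P : ℕ → ℕ} (hP : IsYoung (2 * m) P)
    (h₀ : P 1 = P 0) (h₁ : P (2 * m - 1) = P (2 * m - 2)) : RowIneq m P := by
  have hanti : Antitone fun j => (P j : ℤ) := fun _ _ h => Nat.cast_le.mpr (hP.antitone h)
  have hs₁ := sum_Ico_add_le_of_antitone hanti 2 (m + 1) (m - 1)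
  have hs₂ := sum_Ico_add_le_of_antitone hanti 0 (m - 1) (m - 1)
  rw [show 2 + (m - 1) = m + 1 by omega, show m + 1 + (m - 1) = 2 * m by omega] at hs₁
  rw [zero_add, Nat.Ico_zero_eq_range, show m - 1 + (m - 1) = 2 * m - 2 by omega] at hs₂
  have e₁ : ∑ j ∈ Ico 1 (m + 1), (P j : ℤ) = P 1 + ∑ j ∈ Ico 2 (m + 1), (P j : ℤ) :=
    sum_eq_sum_Ico_succ_bot (by omega) _
  have e₂ : ∑ j ∈ Ico (m - 1) (2 * m - 1), (P j : ℤ)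
      = ∑ j ∈ Ico (m - 1) (2 * m - 2), (P j : ℤ) + P (2 * m - 2) := by
    rw [show 2 * m - 1 = 2 * m - 2 + 1 by omega, sum_Ico_succ_top (by omega)]
  rw [rowIneq_iff hm, rowForm₁, rowForm₂, e₁, e₂, h₀, h₁]
  constructor <;> linarith

lemma exists_eq_col_add_of_odd {m : ℕ} (hm : 2 ≤ m) {P : ℕ → ℕ} (hP : IsYoung (2 * m) P)
    (hPI : RowIneq m P) (hodd : Odd (ysize (2 * m) P)) :
    ∃ a P', Odd a ∧ a ≤ 2 * m - 1 ∧ P = Col a + P' ∧ IsYoung (2 * m) P' ∧ RowIneq m P' := by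
  by_cases h₀ : P 1 < P 0
  · obtain ⟨P', hP', rfl⟩ := hP.exists_eq_col_add h₀
    refine ⟨1, P', odd_one, by omega, rfl, hP', hPI.of_col_add_of_odd (by omega) hodd ?_ ?_⟩
    · rw [rowForm₁_col le_rfl (by omega)]; omega
    · rw [rowForm₂_col le_rfl (by omega)]; omega
  by_cases h₁ : P (2 * m - 2 + 1) < P (2 * m - 2)
  · obtain ⟨P', hP', rfl⟩ := hP.exists_eq_col_add h₁
    refine ⟨2 * m - 2 + 1, P', ⟨m - 1, by omega⟩, by omega, rfl, hP',
      hPI.of_col_add_of_odd (by omega) hodd ?_ ?_⟩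
    · rw [rowForm₁_col (by omega) (by omega)]; omega
    · rw [rowForm₂_col (by omega) (by omega)]; omega
  -- `P` has no column of height `1` or `2m-1`; removing any odd column keeps it that way.
  obtain ⟨k, ⟨c, rfl⟩, hk⟩ := hP.exists_odd_col hodd
  have hc₀ : c ≠ 0 := by rintro rfl; exact h₀ hk
  have hc₁ : c + c ≠ 2 * m - 2 := fun h => h₁ (h ▸ hk)
  have hc₂ : c + c < 2 * m := by
    by_contra h
    have := hP.2 (c + c) (by omega)
    omega
  obtain ⟨P', hP', rfl⟩ := hP.exists_eq_col_add hk
  refine ⟨c + c + 1, P', ⟨c, by ring⟩, by omega, rfl, hP', rowIneq_of_flat (by omega) hP' ?_ ?_⟩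
  · have := hP.antitone (zero_le_one)
    simp only [Pi.add_apply, Col] at h₀ this
    split_ifs at h₀ this <;> omega
  · have := hP.antitone (show 2 * m - 2 ≤ 2 * m - 2 + 1 by omega)
    rw [show 2 * m - 2 + 1 = 2 * m - 1 by omega] at h₁ this
    simp only [Pi.add_apply, Col] at h₁ this ⊢
    split_ifs at h₁ this ⊢ <;> omega

lemma PrimitiveIn.mono {S T : (ℕ → ℕ) → Prop} {P : ℕ → ℕ} (hP : PrimitiveIn S P)
    (hTS : ∀ R, T R → S R) (hT : T P) : PrimitiveIn T P :=
  ⟨hT, hP.2.1, fun A B hA hB => hP.2.2 A B (hTS A hA) (hTS B hB)⟩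

lemma eq_col_of_primitiveIn_of_odd {m : ℕ} (hm : 2 ≤ m) {A B : ℕ → ℕ}
    (hP : PrimitiveIn (fun R => IsYoung (2 * m) R ∧ RowIneq m R ∧ Even (ysize (2 * m) R)) (A + B))
    (hA : IsYoung (2 * m) A) (hAI : RowIneq m A) (hAodd : Odd (ysize (2 * m) A))
    (hB : IsYoung (2 * m) B) (hBI : RowIneq m B) (hBodd : Odd (ysize (2 * m) B)) :
    ∃ a, Odd a ∧ a ≤ 2 * m - 1 ∧ A = Col a := by
  obtain ⟨a, A', ha, ha', rfl, hA', hA'I⟩ := exists_eq_col_add_of_odd hm hA hAI hAodd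
  refine ⟨a, ha, ha', ?_⟩
  by_contra hne
  have ha₁ : 1 ≤ a := ha.pos
  have hA'0 : A' ≠ 0 := fun h => hne (by rw [h, add_zero])
  rw [ysize_add, ysize_col, min_eq_right (by omega)] at hAodd
  refine hP.2.2 A' (B + Col a) ⟨hA', hA'I, (Nat.odd_add.mp hAodd).mp ha⟩
    ⟨hB.add (isYoung_col (by omega)), hBI.add_col_of_odd hBodd ha₁ ha', ?_⟩ hA'0 ?_ ?_
  · rw [ysize_add, ysize_col, min_eq_right (by omega)]
    exact hBodd.add_odd ha
  · intro h
    have := congrFun h 0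
    simp only [Pi.add_apply, Col] at this
    split_ifs at this
    omega
  · funext r
    simp only [Pi.add_apply]
    ring

lemma exists_eq_col_add_col_of_not_primitiveIn {m : ℕ} (hm : 2 ≤ m) {P : ℕ → ℕ}
    (hP : PrimitiveIn (fun R => IsYoung (2 * m) R ∧ RowIneq m R ∧ Even (ysize (2 * m) R)) P)
    (hS : ¬ PrimitiveIn (fun R => IsYoung (2 * m) R ∧ RowIneq m R) P) :
    ∃ i j : ℕ, 2 ≤ i ∧ i ≤ j ∧ j ≤ 2 * m - 2 ∧ Odd i ∧ Odd j ∧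
      P = fun r => Col i r + Col j r := by
  simp only [PrimitiveIn, not_and, not_forall, not_not] at hS
  obtain ⟨A, B, ⟨hA, hAI⟩, ⟨hB, hBI⟩, hA0, hB0, hPAB⟩ := hS ⟨hP.1.1, hP.1.2.1⟩ hP.2.1
  replace hPAB : P = A + B := hPAB
  subst hPAB
  have hsize := hP.1.2.2
  rw [ysize_add] at hsize
  have hAodd : Odd (ysize (2 * m) A) := by
    by_contra hAeven
    rw [Nat.not_odd_iff_even] at hAeven
    exact hP.2.2 A B ⟨hA, hAI, hAeven⟩ ⟨hB, hBI, (Nat.even_add.mp hsize).mp hAeven⟩ hA0 hB0 rfl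
  have hBodd : Odd (ysize (2 * m) B) := by
    rw [← Nat.not_even_iff_odd, ← Nat.even_add.mp hsize]
    exact Nat.not_even_iff_odd.mpr hAodd
  obtain ⟨a, ha, ha', rfl⟩ := eq_col_of_primitiveIn_of_odd hm hP hA hAI hAodd hB hBI hBodd
  obtain ⟨b, hb, hb', rfl⟩ :=
    eq_col_of_primitiveIn_of_odd hm (add_comm (Col a) B ▸ hP) hB hBI hBodd hA hAI hAodd
  rw [rowIneq_col_iff ha.pos ha'] at hAI
  rw [rowIneq_col_iff hb.pos hb'] at hBI
  rcases le_total a b with hab | hba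
  · exact ⟨a, b, hAI.1, hab, hBI.2, ha, hb, rfl⟩
  · exact ⟨b, a, hBI.1, hba, hAI.2, hb, ha, funext fun r => add_comm _ _⟩

lemma primitiveIn_col_add_col {m i j : ℕ} (hi : 2 ≤ i) (hij : i ≤ j) (hj : j ≤ 2 * m - 2)
    (hoi : Odd i) (hoj : Odd j) :
    PrimitiveIn (fun R => IsYoung (2 * m) R ∧ RowIneq m R ∧ Even (ysize (2 * m) R))
      (Col i + Col j) := by
  have hcol (a : ℕ) (ha₂ : 2 ≤ a) (ha' : a ≤ 2 * m - 2) :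
      RowIneq m (Col a) ∧ ysize (2 * m) (Col a) = a := by
    rw [rowIneq_col_iff (by omega) (by omega), ysize_col, min_eq_right (by omega)]
    exact ⟨⟨ha₂, ha'⟩, rfl⟩
  obtain ⟨hiI, hiS⟩ := hcol i hi (by omega)
  obtain ⟨hjI, hjS⟩ := hcol j (by omega) hj
  refine ⟨⟨(isYoung_col (by omega)).add (isYoung_col (by omega)), hiI.add hjI, ?_⟩, ?_, ?_⟩
  · rw [ysize_add, hiS, hjS]
    exact hoi.add_odd hoj
  · intro h
    have := congrFun h 0
    simp only [Pi.add_apply, Col] at this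
    split_ifs at this <;> omega
  · rintro A B ⟨hA, -, hAeven⟩ ⟨hB, -, -⟩ hA0 hB0 h
    rcases hA.eq_col_of_add_eq_col_add_col hB hA0 hB0 hij h.symm with ⟨rfl, -⟩ | ⟨rfl, -⟩
    · exact Nat.not_even_iff_odd.mpr hoi (hiS ▸ hAeven)
    · exact Nat.not_even_iff_odd.mpr hoj (hjS ▸ hAeven)

/-- For `n = 2m ≥ 4`, the basis of the monoid of Young diagrams of order `n`
satisfying the two inequalities and having an even number of boxes consists of the
even-size primitive elements of the monoid cut out by the two inequalities alone,
together with the sums `C_i + C_j` for `2 ≤ i ≤ j ≤ n-2` with `i`, `j` odd. -/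
theorem stmt_11 (m n : ℕ) (hm : 2 ≤ m) (hn : n = 2 * m) (P : ℕ → ℕ) :
    PrimitiveIn (fun R => IsYoung n R ∧ RowIneq m R ∧ Even (ysize n R)) P ↔
    ((PrimitiveIn (fun R => IsYoung n R ∧ RowIneq m R) P ∧ Even (ysize n P)) ∨
      (∃ i j : ℕ, 2 ≤ i ∧ i ≤ j ∧ j ≤ n - 2 ∧ Odd i ∧ Odd j ∧
        P = fun r => Col i r + Col j r)) := by
  subst hn
  constructor
  · intro hP
    by_cases hS : PrimitiveIn (fun R => IsYoung (2 * m) R ∧ RowIneq m R) P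
    · exact Or.inl ⟨hS, hP.1.2.2⟩
    · exact Or.inr (exists_eq_col_add_col_of_not_primitiveIn hm hP hS)
  · rintro (⟨hS, hPeven⟩ | ⟨i, j, hi, hij, hj, hoi, hoj, rfl⟩)
    · exact hS.mono (fun R hR => ⟨hR.1, hR.2.1⟩) ⟨hS.1.1, hS.1.2, hPeven⟩
    · exact primitiveIn_col_add_col hi hij hj hoi hoj
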